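/- Let (X, F) be a measurable space and μ : F → [0,∞] a monotone measure that is subadditive, i.e. μ(A ∪ B) ≤ μ(A) + μ(B) for all A, B ∈ F. Let p > 1 and q satisfy 1/p + 1/q = 1, let A ∈ F, and let f, g, h : X → [0,∞) be measurable functions. Set a = (C)∫_A g f^p dμ and b = (C)∫_A h f^p dμ, and assume 0 < a < ∞ and 0 < b < ∞. Then (C)∫_A f dμ ≤ 4^{1/p} · (1/√p + 1/√q)² · (ab)^{1/p} · ((C)∫_A (b·g + a·h)^{−(q−1)} dμ)^{1/q}, where (b·g + a·h)^{−(q−1)} denotes the function x ↦ 1/(b·g(x) + a·h(x))^{q−1} (with value ∞ where b·g(x) + a·h(x) = 0). -/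

import Mathlib

open scoped ENNReal NNReal

/-- The Choquet integral of `k` on `A` with respect to the monotone set
function `μ`: `(C)∫_A k dμ = ∫_0^∞ μ(A ∩ {k ≥ t}) dt`. -/
noncomputable def choquet {X : Type*} (μ : Set X → ℝ≥0∞) (f : X → ℝ≥0∞)
    (A : Set X) : ℝ≥0∞ :=
  ∫⁻ t in Set.Ioi (0:ℝ), μ (A ∩ {x | ENNReal.ofReal t ≤ f x})

/-!
For `w = b g + a h` and every `l > 0`, Young's inequality applied to `(l f w^{1/p}) (l⁻¹ w^{-1/p})`
gives pointwise `f ≤ l^p/p · f^p w + l^{-q}/q · w^{-(q-1)}`. Subadditivity of `μ` makes the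
Choquet integral quasi-subadditive, `(C)∫(u + v) ≤ θ⁻¹ (C)∫u + (1-θ)⁻¹ (C)∫v` for `0 < θ < 1`,
because `{u + v ≥ t} ⊆ {u ≥ θt} ∪ {v ≥ (1-θ)t}` and `t ↦ θt` rescales `dt`. With `θ = 1/2` this
bounds `(C)∫ f^p w ≤ 4ab`; with `θ = √q/(√p+√q)` and the `l` that makes the two terms equal it
gives the constant `θ⁻¹/p + (1-θ)⁻¹/q = (1/√p + 1/√q)²`.
-/

open MeasureTheory Set

theorem lintegral_Ioi_comp_mul_left (φ : ℝ → ℝ≥0∞) {r : ℝ} (hr : 0 < r) :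
    ∫⁻ t in Ioi 0, φ (r * t) = ENNReal.ofReal r⁻¹ * ∫⁻ t in Ioi 0, φ t := by
  have he : MeasurableEmbedding fun t : ℝ => r * t := measurableEmbedding_mulLeft₀ hr.ne'
  have hpre : (fun t : ℝ => r * t) ⁻¹' Ioi 0 = Ioi 0 := by
    ext t
    simp [mul_pos_iff_of_pos_left hr]
  have hmap := he.restrict_map volume (Ioi 0)
  rw [hpre, Real.map_volume_mul_left hr.ne', Measure.restrict_smul,
    abs_of_pos (inv_pos.mpr hr)] at hmap
  rw [← he.lintegral_map, ← hmap, lintegral_smul_measure, smul_eq_mul]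

theorem setOf_ofReal_add_le_subset_union {X : Type*} {u v : X → ℝ≥0∞} {s t : ℝ} (hs : 0 ≤ s)
    (ht : 0 ≤ t) :
    {x | ENNReal.ofReal (s + t) ≤ u x + v x} ⊆
      {x | ENNReal.ofReal s ≤ u x} ∪ {x | ENNReal.ofReal t ≤ v x} := by
  intro x hx
  by_contra! hlt
  simp only [mem_union, mem_ofPred_eq, not_or, not_le] at hlt
  have := ENNReal.add_lt_add hlt.1 hlt.2
  rw [← ENNReal.ofReal_add hs ht] at this
  exact this.not_ge hx

theorem ENNReal.le_rpow_mul_add_rpow_neg {p q : ℝ} (hpq : p.HolderConjugate q) {l : ℝ}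
    (hl : 0 < l) (y w : ℝ≥0∞) :
    y ≤ ENNReal.ofReal (l ^ p / p) * (y ^ p * w) +
      ENNReal.ofReal (l ^ (-q) / q) * w ^ (-(q - 1)) := by
  have hp := hpq.pos
  have hq := hpq.symm.pos
  have hcp : ENNReal.ofReal (l ^ p / p) ≠ 0 := by
    simp only [ne_eq, ENNReal.ofReal_eq_zero, not_le]; positivity
  have hcq : ENNReal.ofReal (l ^ (-q) / q) ≠ 0 := by
    simp only [ne_eq, ENNReal.ofReal_eq_zero, not_le]; positivity
  rcases eq_or_ne y 0 with rfl | hy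
  · exact zero_le
  rcases eq_or_ne w 0 with rfl | hw0
  · rw [ENNReal.zero_rpow_of_neg (by linarith [hpq.symm.lt]), ENNReal.mul_top hcq, add_top]
    exact le_top
  rcases eq_or_ne w ⊤ with rfl | hw
  · rw [ENNReal.mul_top (ENNReal.rpow_pos_of_nonneg (pos_iff_ne_zero.2 hy) hp.le).ne',
      ENNReal.mul_top hcp, top_add]
    exact le_top
  have hprod : ENNReal.ofReal l * y * w ^ (1 / p) * (ENNReal.ofReal (l ^ (-1 : ℝ)) * w ^ (-(1 / p)))
      = y := by
    calc _ = ENNReal.ofReal (l * l ^ (-1 : ℝ)) * w ^ (1 / p + -(1 / p)) * y := by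
          rw [ENNReal.ofReal_mul hl.le, ENNReal.rpow_add _ _ hw0 hw]
          ring
      _ = y := by simp [Real.rpow_neg_one, hl.ne']
  have hpow_p : (ENNReal.ofReal l * y * w ^ (1 / p)) ^ p / ENNReal.ofReal p =
      ENNReal.ofReal (l ^ p / p) * (y ^ p * w) := by
    rw [ENNReal.mul_rpow_of_nonneg _ _ hp.le, ENNReal.mul_rpow_of_nonneg _ _ hp.le,
      ← ENNReal.rpow_mul, one_div_mul_cancel hp.ne', ENNReal.rpow_one,
      ENNReal.ofReal_rpow_of_pos hl, ENNReal.ofReal_div_of_pos hp, div_eq_mul_inv, div_eq_mul_inv]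
    ring
  have hpow_q : (ENNReal.ofReal (l ^ (-1 : ℝ)) * w ^ (-(1 / p))) ^ q / ENNReal.ofReal q =
      ENNReal.ofReal (l ^ (-q) / q) * w ^ (-(q - 1)) := by
    rw [ENNReal.mul_rpow_of_nonneg _ _ hq.le, ENNReal.ofReal_rpow_of_pos (by positivity),
      ← Real.rpow_mul hl.le, ← ENNReal.rpow_mul, ENNReal.ofReal_div_of_pos hq,
      show -(1 / p) * q = -(q - 1) by rw [← hpq.symm.div_conj_eq_sub_one]; ring]
    simp only [div_eq_mul_inv, neg_one_mul]
    ring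
  calc y = _ := hprod.symm
    _ ≤ _ := ENNReal.young_inequality _ _ hpq
    _ = _ := by rw [hpow_p, hpow_q]

theorem Real.sqrt_ratio_inv_div_add_inv_div {p q : ℝ} (hp : 0 < p) (hq : 0 < q) :
    (√q / (√p + √q))⁻¹ / p + (1 - √q / (√p + √q))⁻¹ / q = (1 / √p + 1 / √q) ^ 2 := by
  have key (s t : ℝ) (hs : 0 < s) (ht : 0 < t) :
      (t / (s + t))⁻¹ / s ^ 2 + (1 - t / (s + t))⁻¹ / t ^ 2 = (1 / s + 1 / t) ^ 2 := by
    have hst : s + t ≠ 0 := by positivity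
    rw [one_sub_div hst, add_sub_cancel_right, inv_div, inv_div]
    field_simp
    ring
  simpa [Real.sq_sqrt hp.le, Real.sq_sqrt hq.le] using
    key _ _ (Real.sqrt_pos.2 hp) (Real.sqrt_pos.2 hq)

theorem Real.HolderConjugate.rpow_div_rpow_mul {p q s t : ℝ} (hpq : p.HolderConjugate q)
    (hs : 0 < s) (ht : 0 < t) :
    ((t / s) ^ (1 / (p * q))) ^ p * s = s ^ (1 / p) * t ^ (1 / q) := by
  have hpq_inv : 1 / p + 1 / q = 1 := by simpa only [one_div] using hpq.inv_add_inv_eq_one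
  rw [← Real.rpow_mul (div_pos ht hs).le, show 1 / (p * q) * p = 1 / q by field_simp [hpq.ne_zero],
    Real.div_rpow ht.le hs.le]
  have hs_split : s = s ^ (1 / p) * s ^ (1 / q) := by
    rw [← Real.rpow_add hs, hpq_inv, Real.rpow_one]
  have : s ^ (1 / q) ≠ 0 := by positivity
  calc t ^ (1 / q) / s ^ (1 / q) * s = t ^ (1 / q) / s ^ (1 / q) * (s ^ (1 / p) * s ^ (1 / q)) :=
        congrArg _ hs_split
    _ = s ^ (1 / p) * t ^ (1 / q) := by field_simp

theorem Real.HolderConjugate.rpow_div_rpow_neg_mul {p q s t : ℝ} (hpq : p.HolderConjugate q)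
    (hs : 0 < s) (ht : 0 < t) :
    ((t / s) ^ (1 / (p * q))) ^ (-q) * t = s ^ (1 / p) * t ^ (1 / q) := by
  rw [Real.rpow_neg (by positivity), ← Real.inv_rpow (by positivity),
    ← Real.inv_rpow (by positivity), inv_div, mul_comm p q, hpq.symm.rpow_div_rpow_mul ht hs,
    mul_comm]

theorem ENNReal.le_mul_rpow_mul_rpow_of_forall_pos_le {p q θ : ℝ} (hpq : p.HolderConjugate q)
    (hθ0 : 0 < θ) (hθ1 : θ < 1) {x S T : ℝ≥0∞} (hS0 : S ≠ 0) (hS : S ≠ ⊤)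
    (h : ∀ l : ℝ, 0 < l → x ≤ ENNReal.ofReal θ⁻¹ * (ENNReal.ofReal (l ^ p / p) * S) +
      ENNReal.ofReal (1 - θ)⁻¹ * (ENNReal.ofReal (l ^ (-q) / q) * T)) :
    x ≤ ENNReal.ofReal (θ⁻¹ / p + (1 - θ)⁻¹ / q) * S ^ (1 / p) * T ^ (1 / q) := by
  have hp := hpq.pos
  have hq := hpq.symm.pos
  rcases eq_or_ne T ⊤ with rfl | hT
  · have hc : ENNReal.ofReal (θ⁻¹ / p + (1 - θ)⁻¹ / q) * S ^ (1 / p) ≠ 0 :=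
      mul_ne_zero (by simp only [ne_eq, ENNReal.ofReal_eq_zero, not_le]; positivity)
        (ENNReal.rpow_pos (pos_iff_ne_zero.2 hS0) hS).ne'
    rw [ENNReal.top_rpow_of_pos (by positivity), ENNReal.mul_top hc]
    exact le_top
  rcases eq_or_ne T 0 with rfl | hT0
  · -- the bound tends to `0` as `l → 0⁺`
    have hcont : Continuous fun l : ℝ => ENNReal.ofReal θ⁻¹ * (ENNReal.ofReal (l ^ p / p) * S) :=
      (ENNReal.continuous_const_mul ENNReal.ofReal_ne_top).comp
        ((ENNReal.continuous_mul_const hS).comp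
          (ENNReal.continuous_ofReal.comp ((Real.continuous_rpow_const hp.le).div_const p)))
    have hlim := (hcont.tendsto 0).mono_left (nhdsWithin_le_nhds (s := Ioi 0))
    rw [Real.zero_rpow hp.ne', zero_div, ENNReal.ofReal_zero, zero_mul, mul_zero] at hlim
    have hx : x ≤ 0 := ge_of_tendsto hlim <| eventually_nhdsWithin_of_forall fun l hl => by
      simpa using h l hl
    rw [nonpos_iff_eq_zero.1 hx]
    exact zero_le
  obtain ⟨s, hs, rfl⟩ : ∃ s : ℝ, 0 < s ∧ S = ENNReal.ofReal s :=
    ⟨S.toReal, ENNReal.toReal_pos hS0 hS, (ENNReal.ofReal_toReal hS).symm⟩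
  obtain ⟨t, ht, rfl⟩ : ∃ t : ℝ, 0 < t ∧ T = ENNReal.ofReal t :=
    ⟨T.toReal, ENNReal.toReal_pos hT0 hT, (ENNReal.ofReal_toReal hT).symm⟩
  -- the choice of `l` that balances the two terms
  set l := (t / s) ^ (1 / (p * q))
  have hbound : θ⁻¹ * (l ^ p / p * s) + (1 - θ)⁻¹ * (l ^ (-q) / q * t) =
      (θ⁻¹ / p + (1 - θ)⁻¹ / q) * s ^ (1 / p) * t ^ (1 / q) := by
    linear_combination (θ⁻¹ / p) * hpq.rpow_div_rpow_mul hs ht +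
      ((1 - θ)⁻¹ / q) * hpq.rpow_div_rpow_neg_mul hs ht
  calc x ≤ _ := h l (by positivity)
    _ = ENNReal.ofReal (θ⁻¹ * (l ^ p / p * s) + (1 - θ)⁻¹ * (l ^ (-q) / q * t)) := by
        rw [ENNReal.ofReal_add (by positivity) (by positivity), ENNReal.ofReal_mul (by positivity),
          ENNReal.ofReal_mul (by positivity), ENNReal.ofReal_mul (by positivity),
          ENNReal.ofReal_mul (by positivity)]
    _ = _ := by
        rw [hbound, ENNReal.ofReal_mul (by positivity), ENNReal.ofReal_mul (by positivity),
          ENNReal.ofReal_rpow_of_pos hs, ENNReal.ofReal_rpow_of_pos ht]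

section Choquet

variable {X : Type*}

theorem choquet_const_mul {μ : Set X → ℝ≥0∞} (k : X → ℝ≥0∞) (A : Set X) {c : ℝ≥0∞}
    (hc0 : c ≠ 0) (hc : c ≠ ⊤) :
    choquet μ (fun x => c * k x) A = c * choquet μ k A := by
  obtain ⟨r, hr, rfl⟩ : ∃ r : ℝ, 0 < r ∧ c = ENNReal.ofReal r :=
    ⟨c.toReal, ENNReal.toReal_pos hc0 hc, (ENNReal.ofReal_toReal hc).symm⟩
  have hlevel (t : ℝ) : {x | ENNReal.ofReal t ≤ ENNReal.ofReal r * k x} =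
      {x | ENNReal.ofReal (r⁻¹ * t) ≤ k x} := by
    ext x
    rw [mem_ofPred_eq, mem_ofPred_eq, inv_mul_eq_div, ENNReal.ofReal_div_of_pos hr,
      ENNReal.div_le_iff_le_mul (Or.inl (by simpa using hr)) (Or.inl ENNReal.ofReal_ne_top),
      mul_comm]
  simp only [choquet, hlevel]
  rw [lintegral_Ioi_comp_mul_left (fun s => μ (A ∩ {x | ENNReal.ofReal s ≤ k x})) (inv_pos.2 hr),
    inv_inv]

variable [MeasurableSpace X]

def IsMonotoneMeasure (μ : Set X → ℝ≥0∞) : Prop :=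
  ∀ A B : Set X, MeasurableSet A → MeasurableSet B → A ⊆ B → μ A ≤ μ B

def IsSubadditiveMeasure (μ : Set X → ℝ≥0∞) : Prop :=
  ∀ A B : Set X, MeasurableSet A → MeasurableSet B → μ (A ∪ B) ≤ μ A + μ B

variable {μ : Set X → ℝ≥0∞} {A : Set X} {k u v : X → ℝ≥0∞}

theorem MeasurableSet.inter_setOf_ofReal_le (hA : MeasurableSet A) (hk : Measurable k) (t : ℝ) :
    MeasurableSet (A ∩ {x | ENNReal.ofReal t ≤ k x}) :=
  hA.inter (measurableSet_le measurable_const hk)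

theorem IsMonotoneMeasure.measurable_inter_setOf_ofReal_le (hμ : IsMonotoneMeasure μ)
    (hA : MeasurableSet A) (hk : Measurable k) :
    Measurable fun t : ℝ => μ (A ∩ {x | ENNReal.ofReal t ≤ k x}) :=
  Antitone.measurable fun s t hst =>
    hμ _ _ (hA.inter_setOf_ofReal_le hk t) (hA.inter_setOf_ofReal_le hk s) <|
      inter_subset_inter_right A fun _ hx => (ENNReal.ofReal_le_ofReal hst).trans hx

theorem choquet_mono (hμ : IsMonotoneMeasure μ) (hA : MeasurableSet A) (hu : Measurable u)
    (hv : Measurable v) (huv : ∀ x, u x ≤ v x) : choquet μ u A ≤ choquet μ v A :=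
  lintegral_mono fun t => hμ _ _ (hA.inter_setOf_ofReal_le hu t) (hA.inter_setOf_ofReal_le hv t) <|
    inter_subset_inter_right A fun x hx => le_trans hx (huv x)

theorem choquet_add_le (hμ : IsMonotoneMeasure μ) (hsub : IsSubadditiveMeasure μ)
    (hA : MeasurableSet A) (hu : Measurable u) (hv : Measurable v) {θ : ℝ} (hθ0 : 0 < θ)
    (hθ1 : θ < 1) :
    choquet μ (fun x => u x + v x) A ≤
      ENNReal.ofReal θ⁻¹ * choquet μ u A + ENNReal.ofReal (1 - θ)⁻¹ * choquet μ v A := by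
  have hlevel : ∀ t ∈ Ioi (0 : ℝ), μ (A ∩ {x | ENNReal.ofReal t ≤ u x + v x}) ≤
      μ (A ∩ {x | ENNReal.ofReal (θ * t) ≤ u x}) +
        μ (A ∩ {x | ENNReal.ofReal ((1 - θ) * t) ≤ v x}) := by
    intro t ht
    have hsplit := setOf_ofReal_add_le_subset_union (u := u) (v := v)
      (mul_nonneg hθ0.le (le_of_lt ht)) (mul_nonneg (sub_nonneg.2 hθ1.le) (le_of_lt ht))
    rw [← add_mul, add_sub_cancel, one_mul] at hsplit
    refine (hμ _ _ (hA.inter_setOf_ofReal_le (hu.add hv) t)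
      ((hA.inter_setOf_ofReal_le hu _).union (hA.inter_setOf_ofReal_le hv _)) ?_).trans
      (hsub _ _ (hA.inter_setOf_ofReal_le hu _) (hA.inter_setOf_ofReal_le hv _))
    rw [← inter_union_distrib_left]
    exact inter_subset_inter_right A hsplit
  have hu_scaled : Measurable fun t : ℝ => μ (A ∩ {x | ENNReal.ofReal (θ * t) ≤ u x}) :=
    (hμ.measurable_inter_setOf_ofReal_le hA hu).comp (measurable_const_mul θ)
  calc choquet μ (fun x => u x + v x) A
      ≤ ∫⁻ t in Ioi 0, (μ (A ∩ {x | ENNReal.ofReal (θ * t) ≤ u x}) +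
          μ (A ∩ {x | ENNReal.ofReal ((1 - θ) * t) ≤ v x})) :=
        setLIntegral_mono' measurableSet_Ioi hlevel
    _ = ENNReal.ofReal θ⁻¹ * choquet μ u A + ENNReal.ofReal (1 - θ)⁻¹ * choquet μ v A := by
        rw [lintegral_add_left hu_scaled,
          lintegral_Ioi_comp_mul_left (fun s => μ (A ∩ {x | ENNReal.ofReal s ≤ u x})) hθ0,
          lintegral_Ioi_comp_mul_left (fun s => μ (A ∩ {x | ENNReal.ofReal s ≤ v x}))
            (sub_pos.2 hθ1)]
        rfl

theorem choquet_add_le_two_mul (hμ : IsMonotoneMeasure μ) (hsub : IsSubadditiveMeasure μ)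
    (hA : MeasurableSet A) (hu : Measurable u) (hv : Measurable v) :
    choquet μ (fun x => u x + v x) A ≤ 2 * choquet μ u A + 2 * choquet μ v A := by
  have h := choquet_add_le hμ hsub hA hu hv (θ := 2⁻¹) (by norm_num) (by norm_num)
  norm_num at h
  exact h

theorem choquet_le_mul_rpow_mul_choquet_rpow (hμ : IsMonotoneMeasure μ)
    (hsub : IsSubadditiveMeasure μ) (hA : MeasurableSet A) {p q θ : ℝ}
    (hpq : p.HolderConjugate q) (hθ0 : 0 < θ) (hθ1 : θ < 1) {f w : X → ℝ≥0∞} (hf : Measurable f)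
    (hw : Measurable w) {S : ℝ≥0∞}
    (hfw : choquet μ (fun x => f x ^ p * w x) A ≤ S) (hS0 : S ≠ 0) (hS : S ≠ ⊤) :
    choquet μ f A ≤ ENNReal.ofReal (θ⁻¹ / p + (1 - θ)⁻¹ / q) * S ^ (1 / p) *
      choquet μ (fun x => w x ^ (-(q - 1))) A ^ (1 / q) := by
  refine ENNReal.le_mul_rpow_mul_rpow_of_forall_pos_le hpq hθ0 hθ1 hS0 hS fun l hl => ?_
  have hfw_meas : Measurable fun x => f x ^ p * w x := (hf.pow_const p).mul hw
  have hwq_meas : Measurable fun x => w x ^ (-(q - 1)) := hw.pow_const _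
  have hcp : ENNReal.ofReal (l ^ p / p) ≠ 0 := by
    simp only [ne_eq, ENNReal.ofReal_eq_zero, not_le]; have := hpq.pos; positivity
  have hcq : ENNReal.ofReal (l ^ (-q) / q) ≠ 0 := by
    simp only [ne_eq, ENNReal.ofReal_eq_zero, not_le]; have := hpq.symm.pos; positivity
  calc choquet μ f A
      ≤ choquet μ (fun x => ENNReal.ofReal (l ^ p / p) * (f x ^ p * w x) +
          ENNReal.ofReal (l ^ (-q) / q) * w x ^ (-(q - 1))) A :=
        choquet_mono hμ hA hf ((hfw_meas.const_mul _).add (hwq_meas.const_mul _))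
          fun x => ENNReal.le_rpow_mul_add_rpow_neg hpq hl (f x) (w x)
    _ ≤ ENNReal.ofReal θ⁻¹ * (ENNReal.ofReal (l ^ p / p) * choquet μ (fun x => f x ^ p * w x) A) +
          ENNReal.ofReal (1 - θ)⁻¹ * (ENNReal.ofReal (l ^ (-q) / q) *
            choquet μ (fun x => w x ^ (-(q - 1))) A) := by
        rw [← choquet_const_mul _ A hcp ENNReal.ofReal_ne_top,
          ← choquet_const_mul _ A hcq ENNReal.ofReal_ne_top]
        exact choquet_add_le hμ hsub hA (hfw_meas.const_mul _) (hwq_meas.const_mul _) hθ0 hθ1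
    _ ≤ _ := by gcongr

end Choquet

theorem carlson_choquet_subadditive_general {X : Type*} [MeasurableSpace X]
    -- μ : F → [0,∞] is a subadditive monotone measure
    (μ : Set X → ℝ≥0∞)
    (hμmono : ∀ A B : Set X, MeasurableSet A → MeasurableSet B → A ⊆ B → μ A ≤ μ B)
    (hsubadd : ∀ A B : Set X, MeasurableSet A → MeasurableSet B →
      μ (A ∪ B) ≤ μ A + μ B)
    -- p > 1, 1/p + 1/q = 1
    (p q : ℝ) (hp : 1 < p) (hpq : 1/p + 1/q = 1)
    (A : Set X) (hA : MeasurableSet A)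
    -- f, g, h : X → [0,∞) measurable
    (f g h : X → ℝ≥0) (hf : Measurable f) (hg : Measurable g) (hh : Measurable h)
    -- a = (C)∫_A g f^p dμ, b = (C)∫_A h f^p dμ, with 0 < a < ∞ and 0 < b < ∞
    (a b : ℝ≥0∞)
    (ha : a = choquet μ (fun x => (g x : ℝ≥0∞) * (f x : ℝ≥0∞) ^ p) A)
    (hb : b = choquet μ (fun x => (h x : ℝ≥0∞) * (f x : ℝ≥0∞) ^ p) A)
    (ha0 : 0 < a) (haf : a < ∞) (hb0 : 0 < b) (hbf : b < ∞) :
    choquet μ (fun x => (f x : ℝ≥0∞)) A ≤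
      (4 : ℝ≥0∞) ^ (1/p) *
        ENNReal.ofReal ((1 / Real.sqrt p + 1 / Real.sqrt q) ^ 2) *
        (a * b) ^ (1/p) *
        (choquet μ (fun x => (b * (g x : ℝ≥0∞) + a * (h x : ℝ≥0∞)) ^ (-(q-1))) A)
          ^ (1/q) := by
  have hpq' : p.HolderConjugate q :=
    Real.holderConjugate_iff.2 ⟨hp, by simpa only [one_div] using hpq⟩
  have hweight : choquet μ (fun x => (f x : ℝ≥0∞) ^ p * (b * g x + a * h x)) A ≤ 4 * (a * b) :=
    calc choquet μ (fun x => (f x : ℝ≥0∞) ^ p * (b * g x + a * h x)) A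
        = choquet μ (fun x => b * (g x * f x ^ p) + a * (h x * f x ^ p)) A := by
          congr 1 with x
          ring
      _ ≤ 2 * choquet μ (fun x => b * (g x * f x ^ p)) A +
            2 * choquet μ (fun x => a * (h x * f x ^ p)) A :=
          choquet_add_le_two_mul hμmono hsubadd hA (by fun_prop) (by fun_prop)
      _ = 4 * (a * b) := by
          rw [choquet_const_mul _ A hb0.ne' hbf.ne, choquet_const_mul _ A ha0.ne' haf.ne,
            ← ha, ← hb]
          ring
  have hsp := Real.sqrt_pos.2 hpq'.pos
  have hsq := Real.sqrt_pos.2 hpq'.symm.pos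
  calc choquet μ (fun x => (f x : ℝ≥0∞)) A
      ≤ _ := choquet_le_mul_rpow_mul_choquet_rpow hμmono hsubadd hA hpq' (θ := √q / (√p + √q))
          (by positivity) ((div_lt_one (by positivity)).2 (lt_add_of_pos_left _ hsp))
          (by fun_prop) (by fun_prop) hweight
          (mul_ne_zero four_ne_zero (mul_ne_zero ha0.ne' hb0.ne'))
          (ENNReal.mul_ne_top ENNReal.ofNat_ne_top (ENNReal.mul_ne_top haf.ne hbf.ne))
    _ = _ := by
        rw [Real.sqrt_ratio_inv_div_add_inv_div hpq'.pos hpq'.symm.pos,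
          ENNReal.mul_rpow_of_nonneg _ _ (by positivity)]
        ring

/-- Carlson type inequality for the Choquet integral with respect to a
subadditive monotone measure:
`(C)∫_A f dμ ≤ 4^{1/p} (1/√p + 1/√q)² (ab)^{1/p}
((C)∫_A (bg + ah)^{−(q−1)} dμ)^{1/q}`
where `a = (C)∫_A g f^p dμ` and `b = (C)∫_A h f^p dμ`. -/
theorem carlson_choquet_subadditive {X : Type*} [MeasurableSpace X]
    -- μ : F → [0,∞] is a subadditive monotone measure
    (μ : Set X → ℝ≥0∞)
    (hμ0 : μ ∅ = 0) (hμX : 0 < μ Set.univ)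
    (hμmono : ∀ A B : Set X, MeasurableSet A → MeasurableSet B → A ⊆ B → μ A ≤ μ B)
    (hsubadd : ∀ A B : Set X, MeasurableSet A → MeasurableSet B →
      μ (A ∪ B) ≤ μ A + μ B)
    -- p > 1, 1/p + 1/q = 1
    (p q : ℝ) (hp : 1 < p) (hpq : 1/p + 1/q = 1)
    (A : Set X) (hA : MeasurableSet A)
    -- f, g, h : X → [0,∞) measurable
    (f g h : X → ℝ≥0) (hf : Measurable f) (hg : Measurable g) (hh : Measurable h)
    -- a = (C)∫_A g f^p dμ, b = (C)∫_A h f^p dμ, with 0 < a < ∞ and 0 < b < ∞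
    (a b : ℝ≥0∞)
    (ha : a = choquet μ (fun x => (g x : ℝ≥0∞) * (f x : ℝ≥0∞) ^ p) A)
    (hb : b = choquet μ (fun x => (h x : ℝ≥0∞) * (f x : ℝ≥0∞) ^ p) A)
    (ha0 : 0 < a) (haf : a < ∞) (hb0 : 0 < b) (hbf : b < ∞) :
    choquet μ (fun x => (f x : ℝ≥0∞)) A ≤
      (4 : ℝ≥0∞) ^ (1/p) *
        ENNReal.ofReal ((1 / Real.sqrt p + 1 / Real.sqrt q) ^ 2) *
        (a * b) ^ (1/p) *
        (choquet μ (fun x => (b * (g x : ℝ≥0∞) + a * (h x : ℝ≥0∞)) ^ (-(q-1))) A)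
          ^ (1/q) :=
  carlson_choquet_subadditive_general μ hμmono hsubadd p q hp hpq A hA f g h hf hg hh a b ha hb ha0
    haf hb0 hbf
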